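/- arXiv:1308.5369 — 2 statements merged into one kernel-verified Lean document; each statement's English description precedes it below -/
import Mathlib

section
/- Let r ≥ 1 be an integer and let κ₁, κ₂, χ, c₁, c₂ be real numbers, with a = χ(c₁+c₂)/2. Every complex eigenvalue of the 2r×2r block matrix M has strictly negative real part if and only if a > κ₁ and a·(κ₂ − κ₁) > 0. -/
/-!
After permuting coordinates, `M` is the Kronecker product `B ⊗ I_r` with
`B = [[κ₁, -a], [κ₂, -a]]`, so `χ_M = χ_B ^ r` and `M` is Hurwitz iff `B` is. A real `2 × 2`
matrix is Hurwitz iff its trace is negative and its determinant positive, and here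
`tr B = κ₁ - a`, `det B = a (κ₂ - κ₁)`.
-/

open Matrix Polynomial Kronecker

def Equiv.finTwoProdEquivSum (α : Type*) : Fin 2 × α ≃ α ⊕ α :=
  (finTwoEquiv.prodCongr (.refl α)).trans (boolProdEquivSum α)

theorem Matrix.fromBlocks_smul_one_eq_reindex_kronecker {n R : Type*} [DecidableEq n]
    [Semiring R] (a b c d : R) :
    fromBlocks (a • 1 : Matrix n n R) (b • 1) (c • 1) (d • 1) =
      reindex (Equiv.finTwoProdEquivSum n) (Equiv.finTwoProdEquivSum n) (!![a, b; c, d] ⊗ₖ 1) := by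
  ext (i | i) (j | j) <;> simp [Equiv.finTwoProdEquivSum, finTwoEquiv, one_apply]

section Charpoly

variable {m n R : Type*} [Fintype m] [DecidableEq m] [Fintype n] [DecidableEq n] [CommRing R]

theorem Matrix.charmatrix_kronecker_one (A : Matrix m m R) :
    charmatrix (A ⊗ₖ (1 : Matrix n n R)) = charmatrix A ⊗ₖ (1 : Matrix n n R[X]) := by
  ext ⟨i, k⟩ ⟨j, l⟩ : 1
  by_cases hij : i = j <;> by_cases hkl : k = l <;> simp [hij, hkl]

theorem Matrix.charpoly_kronecker_one (A : Matrix m m R) :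
    (A ⊗ₖ (1 : Matrix n n R)).charpoly = A.charpoly ^ Fintype.card n := by
  rw [charpoly, charmatrix_kronecker_one, det_kronecker, det_one, one_pow, mul_one, charpoly]

theorem Matrix.charpoly_fromBlocks_smul_one (a b c d : R) :
    (fromBlocks (a • 1 : Matrix n n R) (b • 1 : Matrix n n R) (c • 1 : Matrix n n R)
      (d • 1 : Matrix n n R)).charpoly =
      !![a, b; c, d].charpoly ^ Fintype.card n := by
  rw [fromBlocks_smul_one_eq_reindex_kronecker, charpoly_reindex, charpoly_kronecker_one]

end Charpoly

theorem Polynomial.isRoot_pow_iff {R : Type*} [CommSemiring R] [NoZeroDivisors R] {p : R[X]}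
    {n : ℕ} (hn : n ≠ 0) {x : R} : (p ^ n).IsRoot x ↔ p.IsRoot x := by
  simp only [IsRoot.def, eval_pow, pow_eq_zero_iff hn]

namespace Complex

theorem re_neg_of_sq_sub_mul_add_eq_zero {t d : ℝ} (ht : t < 0) (hd : 0 < d) {z : ℂ}
    (hz : z ^ 2 - t * z + d = 0) : z.re < 0 := by
  by_contra! hre
  have him : z.im * (2 * z.re - t) = 0 := by
    have := congrArg im hz
    simp only [sq, sub_im, add_im, mul_im, ofReal_re, ofReal_im, zero_im] at this
    linear_combination this
  have hzim : z.im = 0 := (mul_eq_zero.1 him).resolve_right (by linarith)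
  have hzre : z.re ^ 2 - t * z.re + d = 0 := by
    have := congrArg re hz
    simp only [sq, sub_re, add_re, mul_re, ofReal_re, ofReal_im, zero_re, hzim] at this
    linear_combination this
  nlinarith [mul_nonneg (neg_nonneg.2 ht.le) hre]

theorem neg_and_pos_of_forall_sq_sub_mul_add_eq_zero_re_neg {t d : ℝ}
    (h : ∀ z : ℂ, z ^ 2 - t * z + d = 0 → z.re < 0) : t < 0 ∧ 0 < d := by
  obtain ⟨μ, hμ⟩ : ∃ μ : ℂ, 1 * (μ * μ) + (-t) * μ + d = 0 :=
    exists_quadratic_eq_zero one_ne_zero (IsAlgClosed.exists_eq_mul_self _)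
  -- Vieta: the other root is `ν = t - μ`, and `d = μ ν = re μ re ν + (im μ) ^ 2`.
  set ν : ℂ := t - μ
  have hμre : μ.re < 0 := h μ (by linear_combination hμ)
  have hνre : ν.re < 0 := h ν (by linear_combination hμ)
  have hνre' : ν.re = t - μ.re := by simp [ν]
  have hνim : ν.im = -μ.im := by simp [ν]
  have hd : (d : ℂ) = μ * ν := by linear_combination hμ
  have hdre : d = μ.re * ν.re - μ.im * ν.im := by simpa [mul_re] using congrArg re hd
  constructor
  · linarith
  · rw [hdre, hνim]
    nlinarith [mul_pos_of_neg_of_neg hμre hνre, sq_nonneg μ.im]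

theorem forall_sq_sub_mul_add_eq_zero_re_neg_iff (t d : ℝ) :
    (∀ z : ℂ, z ^ 2 - t * z + d = 0 → z.re < 0) ↔ t < 0 ∧ 0 < d :=
  ⟨neg_and_pos_of_forall_sq_sub_mul_add_eq_zero_re_neg,
    fun ⟨ht, hd⟩ _ ↦ re_neg_of_sq_sub_mul_add_eq_zero ht hd⟩

end Complex

theorem Matrix.forall_charpoly_root_re_neg_iff_fin_two (A : Matrix (Fin 2) (Fin 2) ℝ) :
    (∀ z : ℂ, (A.map (algebraMap ℝ ℂ)).charpoly.IsRoot z → z.re < 0) ↔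
      A.trace < 0 ∧ 0 < A.det := by
  simp only [charpoly_map, charpoly_fin_two, IsRoot.def, eval_map_algebraMap]
  simpa using Complex.forall_sq_sub_mul_add_eq_zero_re_neg_iff A.trace A.det

theorem pso_drift_hurwitz_iff_general (r : ℕ) (hr : 1 ≤ r) (κ₁ κ₂ a : ℝ)
    (M : Matrix (Fin r ⊕ Fin r) (Fin r ⊕ Fin r) ℝ)
    (hM : M = Matrix.fromBlocks
      (κ₁ • (1 : Matrix (Fin r) (Fin r) ℝ))
      ((-a) • (1 : Matrix (Fin r) (Fin r) ℝ))
      (κ₂ • (1 : Matrix (Fin r) (Fin r) ℝ))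
      ((-a) • (1 : Matrix (Fin r) (Fin r) ℝ))) :
    (∀ μ : ℂ, ((M.map (algebraMap ℝ ℂ)).charpoly).IsRoot μ → μ.re < 0) ↔
      (κ₁ < a ∧ 0 < a * (κ₂ - κ₁)) := by
  have hroots (μ : ℂ) : (M.map (algebraMap ℝ ℂ)).charpoly.IsRoot μ ↔
      (!![κ₁, -a; κ₂, -a].map (algebraMap ℝ ℂ)).charpoly.IsRoot μ := by
    rw [charpoly_map, charpoly_map, hM, charpoly_fromBlocks_smul_one, Fintype.card_fin,
      Polynomial.map_pow, isRoot_pow_iff (by omega)]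
  simp_rw [hroots, forall_charpoly_root_re_neg_iff_fin_two, trace_fin_two_of, det_fin_two_of]
  constructor <;> rintro ⟨h₁, h₂⟩ <;> constructor <;> linarith

/-- Hurwitz stability of the PSO drift block matrix `M = [[κ₁ I, -a I], [κ₂ I, -a I]]`
(with `a = χ(c₁+c₂)/2`): every complex eigenvalue of `M` has strictly negative real part
iff `a > κ₁` and `a (κ₂ - κ₁) > 0`. -/
theorem pso_drift_hurwitz_iff (r : ℕ) (hr : 1 ≤ r) (κ₁ κ₂ χ c₁ c₂ a : ℝ)
    (ha : a = χ * (c₁ + c₂) / 2)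
    (M : Matrix (Fin r ⊕ Fin r) (Fin r ⊕ Fin r) ℝ)
    (hM : M = Matrix.fromBlocks
      (κ₁ • (1 : Matrix (Fin r) (Fin r) ℝ))
      ((-a) • (1 : Matrix (Fin r) (Fin r) ℝ))
      (κ₂ • (1 : Matrix (Fin r) (Fin r) ℝ))
      ((-a) • (1 : Matrix (Fin r) (Fin r) ℝ))) :
    (∀ μ : ℂ, ((M.map (algebraMap ℝ ℂ)).charpoly).IsRoot μ → μ.re < 0) ↔
      (κ₁ < a ∧ 0 < a * (κ₂ - κ₁)) :=
  pso_drift_hurwitz_iff_general r hr κ₁ κ₂ a M hM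
end

section
/- Let M₁ be the real 4×4 matrix M₁ = [[−0.271, 0, −1.5, 0], [0, −0.271, 0, −1.5], [1, 0, −1.5, 0], [0, 1, 0, −1.5]]. Then every differentiable function θ : ℝ → ℝ⁴ satisfying θ'(t) = M₁·θ(t) for all t ≥ 0 converges to the zero vector as t → ∞. -/
/-!
The squared Euclidean norm `V(θ) = θ ⬝ᵥ θ` is a strict Lyapunov function: along a solution,
`V' = 2 θ ⬝ᵥ M₁ θ ≤ -0.2 V`, because the symmetric part of `M₁` is negative definite with margin
`0.1`. Grönwall's inequality then gives `V(t) ≤ V(0) e^{-0.2 t}`, and `V` dominates every squared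
coordinate.
-/

open Matrix Filter Topology

theorem HasDerivAt.dotProduct {ι : Type*} [Fintype ι] {f g : ℝ → ι → ℝ} {f' g' : ι → ℝ} {t : ℝ}
    (hf : HasDerivAt f f' t) (hg : HasDerivAt g g' t) :
    HasDerivAt (fun s => f s ⬝ᵥ g s) (f' ⬝ᵥ g t + f t ⬝ᵥ g') t := by
  simp only [_root_.dotProduct, ← Finset.sum_add_distrib]
  exact HasDerivAt.fun_sum fun i _ => (hasDerivAt_pi.1 hf i).mul (hasDerivAt_pi.1 hg i)

theorem le_mul_exp_of_hasDerivAt_le_neg_mul {f f' : ℝ → ℝ} {c : ℝ}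
    (hf : ∀ t, 0 ≤ t → HasDerivAt f (f' t) t) (hbound : ∀ t, 0 ≤ t → f' t ≤ -c * f t)
    {t : ℝ} (ht : 0 ≤ t) : f t ≤ f 0 * Real.exp (-c * t) := by
  have hgronwall := le_gronwallBound_of_liminf_deriv_right_le (f := f) (f' := f') (K := -c)
    (ε := 0) (a := 0) (b := t) (fun s hs => (hf s hs.1).continuousAt.continuousWithinAt)
    (fun s hs _ hr => (hf s hs.1).hasDerivWithinAt.liminf_right_slope_le hr) le_rfl
    (fun s hs => by simpa using hbound s hs.1) t ⟨ht, le_rfl⟩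
  simpa [gronwallBound_ε0] using hgronwall

theorem tendsto_zero_of_hasDerivAt_le_neg_mul {f f' : ℝ → ℝ} {c : ℝ} (hc : 0 < c)
    (hf : ∀ t, 0 ≤ t → HasDerivAt f (f' t) t) (hbound : ∀ t, 0 ≤ t → f' t ≤ -c * f t)
    (hnonneg : ∀ t, 0 ≤ f t) : Tendsto f atTop (𝓝 0) := by
  have hexp : Tendsto (fun t => f 0 * Real.exp (-c * t)) atTop (𝓝 0) := by
    simpa using (Real.tendsto_exp_atBot.comp
      (tendsto_id.const_mul_atTop_of_neg (neg_lt_zero.2 hc))).const_mul (f 0)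
  refine tendsto_of_tendsto_of_tendsto_of_le_of_le' tendsto_const_nhds hexp
    (Eventually.of_forall hnonneg) ?_
  filter_upwards [eventually_ge_atTop 0] with t ht
  exact le_mul_exp_of_hasDerivAt_le_neg_mul hf hbound ht

theorem tendsto_zero_of_tendsto_dotProduct_self {ι α : Type*} [Fintype ι] {l : Filter α}
    {x : α → ι → ℝ} (hx : Tendsto (fun a => x a ⬝ᵥ x a) l (𝓝 0)) : Tendsto x l (𝓝 0) := by
  refine squeeze_zero_norm (fun a => (pi_norm_le_iff_of_nonneg (Real.sqrt_nonneg _)).2 fun i => ?_)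
    (by simpa using hx.sqrt)
  rw [Real.norm_eq_abs]
  refine Real.abs_le_sqrt ?_
  simpa only [_root_.dotProduct, sq] using
    Finset.single_le_sum (f := fun j => x a j * x a j) (fun j _ => mul_self_nonneg _)
      (Finset.mem_univ i)

theorem Matrix.tendsto_zero_of_hasDerivAt_mulVec {ι : Type*} [Fintype ι] (M : Matrix ι ι ℝ)
    {c : ℝ} (hc : 0 < c) (hM : ∀ x, x ⬝ᵥ M *ᵥ x ≤ -c * (x ⬝ᵥ x)) {θ : ℝ → ι → ℝ}
    (hθ : ∀ t, 0 ≤ t → HasDerivAt θ (M *ᵥ θ t) t) : Tendsto θ atTop (𝓝 0) := by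
  refine tendsto_zero_of_tendsto_dotProduct_self <| tendsto_zero_of_hasDerivAt_le_neg_mul
    (mul_pos two_pos hc) (fun t ht => (hθ t ht).dotProduct (hθ t ht)) (fun t _ => ?_)
    fun t => dotProduct_self_star_nonneg (θ t)
  have := hM (θ t)
  rw [dotProduct_comm (M *ᵥ θ t)]
  linarith

/- Per particle, with position `p` and velocity `v`, the form is `-0.271 p² - 0.5 p v - 1.5 v²`,
and `-0.171 p² - 0.5 p v - 1.4 v² = -(p + 2 v)² / 8 - 0.046 p² - 0.9 v²`. -/
theorem pso_example1_dotProduct_mulVec_le (x : Fin 4 → ℝ) :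
    x ⬝ᵥ !![(-0.271 : ℝ), 0, -1.5, 0;
            0, -0.271, 0, -1.5;
            1, 0, -1.5, 0;
            0, 1, 0, -1.5] *ᵥ x ≤ -0.1 * (x ⬝ᵥ x) := by
  simp only [_root_.dotProduct, mulVec, of_apply, cons_val', cons_val_fin_one, Fin.sum_univ_four,
    cons_val_zero, cons_val_one, cons_val, neg_mul, zero_mul, add_zero, zero_add, one_mul]
  nlinarith [sq_nonneg (x 0 + 2 * x 2), sq_nonneg (x 1 + 2 * x 3), sq_nonneg (x 0),
    sq_nonneg (x 1), sq_nonneg (x 2), sq_nonneg (x 3)]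

/-- Global asymptotic stability of the PSO limit ODE `θ' = M₁ θ` (two particles,
`F(x) = x²`, `χ = 1`, `κ₁ = -0.271`, `κ₂ = 1`, `c₁ = c₂ = 1.5`): every differentiable
solution converges to the zero vector as `t → ∞`. -/
theorem pso_example1_ode_convergence
    (M₁ : Matrix (Fin 4) (Fin 4) ℝ)
    (hM : M₁ = !![(-0.271 : ℝ), 0, -1.5, 0;
                  0, -0.271, 0, -1.5;
                  1, 0, -1.5, 0;
                  0, 1, 0, -1.5])
    (θ : ℝ → Fin 4 → ℝ) (hθ : Differentiable ℝ θ)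
    (hode : ∀ t : ℝ, 0 ≤ t → deriv θ t = M₁.mulVec (θ t)) :
    Filter.Tendsto θ Filter.atTop (nhds 0) := by
  subst hM
  exact tendsto_zero_of_hasDerivAt_mulVec _ (by norm_num) pso_example1_dotProduct_mulVec_le
    fun t ht => hode t ht ▸ (hθ t).hasDerivAt
end
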